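/- arXiv:2310.06602 — 6 statements merged into one kernel-verified Lean document; each statement's English description precedes it below -/
import Mathlib

section
/- Let F : ℝⁿ ⇉ ℝ^q be a polyhedral convex set-valued mapping and let G be its recession mapping, i.e., gr G = 0⁺(gr F) (the recession cone of the graph of F). Then G is a set-valued mapping whose graph is a polyhedral convex cone, and for every x ∈ dom F one has G(0) = 0⁺F(x), i.e., G(0) equals the recession cone of the polyhedron F(x). -/
open Set Matrix Pointwise RealInnerProductSpace

def IsPolyhedron {E : Type*} [AddCommGroup E] [Module ℝ E] (P : Set E) : Prop :=
  ∃ (m : ℕ) (f : Fin m → (E →ₗ[ℝ] ℝ)) (b : Fin m → ℝ), P = {x | ∀ i, f i x ≤ b i}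

def graphOf {α β : Type*} (F : α → Set β) : Set (α × β) := {p | p.2 ∈ F p.1}

def recc {E : Type*} [AddCommGroup E] [Module ℝ E] (P : Set E) : Set E :=
  {d | ∀ p ∈ P, p + d ∈ P}

def IsConvexCone {E : Type*} [AddCommGroup E] [Module ℝ E] (C : Set E) : Prop :=
  Convex ℝ C ∧ ∀ c ∈ C, ∀ r : ℝ, 0 ≤ r → r • c ∈ C

lemma recc_poly {E : Type*} [AddCommGroup E] [Module ℝ E] {m : ℕ}
    (f : Fin m → (E →ₗ[ℝ] ℝ)) (b : Fin m → ℝ)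
    (hne : {x | ∀ i, f i x ≤ b i}.Nonempty) :
    recc {x | ∀ i, f i x ≤ b i} = {d | ∀ i, f i d ≤ 0} := by
  ext d
  constructor
  · intro hd i
    obtain ⟨p0, hp0⟩ := hne
    have key : ∀ k : ℕ, (p0 + k • d) ∈ {x | ∀ i, f i x ≤ b i} := by
      intro k
      induction k with
      | zero => simpa using hp0
      | succ k ih =>
        have := hd _ ih
        have h2 : p0 + k • d + d = p0 + (k + 1) • d := by
          rw [add_smul, one_smul]; abel
        rwa [h2] at this
    by_contra hpos
    push_neg at hpos
    obtain ⟨k, hk⟩ := exists_nat_gt ((b i - f i p0) / f i d)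
    have hk2 := key k i
    rw [map_add, map_nsmul] at hk2
    have : (b i - f i p0) / f i d * f i d < (k : ℝ) * f i d :=
      mul_lt_mul_of_pos_right hk hpos
    rw [div_mul_cancel₀ _ (ne_of_gt hpos)] at this
    simp only [nsmul_eq_mul] at hk2
    linarith
  · intro hd p hp i
    have := hp i
    have h2 := hd i
    rw [map_add]
    linarith

theorem stmt3 {n q : ℕ} (F G : (Fin n → ℝ) → Set (Fin q → ℝ))
    (hF : IsPolyhedron (graphOf F)) (hne : (graphOf F).Nonempty)
    (hG : graphOf G = recc (graphOf F)) :
    (IsPolyhedron (graphOf G) ∧ IsConvexCone (graphOf G)) ∧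
      ∀ x, (F x).Nonempty → G 0 = recc (F x) := by
  obtain ⟨m, f, b, hfb⟩ := hF
  rw [hfb] at hne
  have hGg : graphOf G = {p | ∀ i, f i p ≤ 0} := by
    rw [hG, hfb, recc_poly f b hne]
  refine ⟨⟨⟨m, f, 0, by simpa using hGg⟩, ?_, ?_⟩, ?_⟩
  · -- convex
    rw [hGg]
    intro p hp r hr a c ha hc _ i
    have hpi := hp i
    have hri := hr i
    rw [map_add, LinearMap.map_smul, LinearMap.map_smul]
    simp only [smul_eq_mul]
    have h1 : a * f i p ≤ 0 := mul_nonpos_of_nonneg_of_nonpos ha hpi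
    have h2 : c * f i r ≤ 0 := mul_nonpos_of_nonneg_of_nonpos hc hri
    linarith
  · rw [hGg]
    intro p hp r hr i
    rw [LinearMap.map_smul, smul_eq_mul]
    exact mul_nonpos_of_nonneg_of_nonpos hr (hp i)
  · intro x hx
    -- F x as a polyhedron in y
    set g : Fin m → ((Fin q → ℝ) →ₗ[ℝ] ℝ) := fun i => (f i).comp (LinearMap.inr ℝ _ _) with hg
    have hsplit : ∀ i (y : Fin q → ℝ), f i (x, y) = f i (x, 0) + g i y := by
      intro i y
      rw [hg]
      simp only [LinearMap.comp_apply, LinearMap.inr_apply]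
      rw [← map_add]
      congr 1
      simp
    have hFx : F x = {y | ∀ i, g i y ≤ b i - f i (x, 0)} := by
      ext y
      have : y ∈ F x ↔ (x, y) ∈ graphOf F := Iff.rfl
      rw [this, hfb]
      constructor
      · intro h i; have := h i; rw [hsplit i y] at this; simp; linarith
      · intro h i; have := h i; rw [hsplit i y]; linarith
    rw [hFx] at hx ⊢
    rw [recc_poly _ _ hx]
    ext y
    have : y ∈ G 0 ↔ (0, y) ∈ graphOf G := Iff.rfl
    rw [this, hGg]
    constructor
    · intro h i
      have := h i
      rw [hg]
      simp only [LinearMap.comp_apply, LinearMap.inr_apply]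
      exact this
    · intro h i
      exact h i
end

section
/- Let F : ℝⁿ ⇉ ℝ^q be a polyhedral convex set-valued mapping with recession mapping G, and let C ⊆ ℝ^q be a polyhedral convex cone. Then the recession cone of the upper image P = C + ⋃_{x ∈ ℝⁿ} F(x) equals the upper image of the homogeneous problem, Q = C + ⋃_{x ∈ ℝⁿ} G(x); that is, 0⁺P = Q. -/
open Set Matrix Pointwise RealInnerProductSpace

section helpers

variable {E E' : Type*} [AddCommGroup E] [Module ℝ E] [AddCommGroup E'] [Module ℝ E']

lemma isPolyhedron_of_fintype {ι : Type*} [Fintype ι] (f : ι → (E →ₗ[ℝ] ℝ)) (b : ι → ℝ) :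
    IsPolyhedron {x | ∀ i, f i x ≤ b i} := by
  obtain ⟨e⟩ : Nonempty (Fin (Fintype.card ι) ≃ ι) := ⟨(Fintype.equivFin ι).symm⟩
  refine ⟨_, fun i => f (e i), fun i => b (e i), ?_⟩
  ext x
  exact ⟨fun h i => h (e i), fun h i => by simpa using h (e.symm i)⟩

lemma IsPolyhedron.preimage {P : Set E} (L : E' →ₗ[ℝ] E) (h : IsPolyhedron P) :
    IsPolyhedron (L ⁻¹' P) := by
  obtain ⟨m, f, b, rfl⟩ := h
  exact ⟨m, fun i => (f i).comp L, b, rfl⟩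

lemma IsPolyhedron.inter {P Q : Set E} (hP : IsPolyhedron P) (hQ : IsPolyhedron Q) :
    IsPolyhedron (P ∩ Q) := by
  obtain ⟨m1, f1, b1, rfl⟩ := hP
  obtain ⟨m2, f2, b2, rfl⟩ := hQ
  have := isPolyhedron_of_fintype (Sum.elim f1 f2) (Sum.elim b1 b2)
  convert this using 1
  ext x
  simp [Sum.forall, mem_setOf_eq]

lemma IsPolyhedron.prod {P : Set E} {Q : Set E'} (hP : IsPolyhedron P) (hQ : IsPolyhedron Q) :
    IsPolyhedron (P ×ˢ Q) := by
  rw [Set.prod_eq]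
  exact (hP.preimage (LinearMap.fst ℝ E E')).inter (hQ.preimage (LinearMap.snd ℝ E E'))

lemma IsPolyhedron.image_equiv {P : Set E} (e : E ≃ₗ[ℝ] E') (h : IsPolyhedron P) :
    IsPolyhedron (e '' P) := by
  have : e '' P = (e.symm : E' →ₗ[ℝ] E) ⁻¹' P := by
    ext x; simp [LinearEquiv.image_eq_preimage_symm]
  rw [this]
  exact h.preimage _

lemma recc_iterate {S : Set E} {d : E} (hd : d ∈ recc S) {p : E} (hp : p ∈ S) (k : ℕ) :
    p + (k : ℝ) • d ∈ S := by
  induction k with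
  | zero => simpa using hp
  | succ k ih =>
      have : p + ((k : ℝ) + 1) • d = (p + (k : ℝ) • d) + d := by
        rw [add_smul, one_smul, add_assoc]
      push_cast
      rw [this]
      exact hd _ ih

lemma recc_setOf {ι : Type*} (f : ι → (E →ₗ[ℝ] ℝ)) (b : ι → ℝ)
    (hne : {x : E | ∀ i, f i x ≤ b i}.Nonempty) :
    recc {x : E | ∀ i, f i x ≤ b i} = {x : E | ∀ i, f i x ≤ 0} := by
  ext d
  constructor
  · intro hd i
    obtain ⟨p, hp⟩ := hne
    by_contra h
    push_neg at h
    obtain ⟨k, hk⟩ := exists_nat_gt ((b i - f i p) / f i d)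
    have h1 := recc_iterate hd hp k i
    rw [map_add, _root_.map_smul, smul_eq_mul] at h1
    have h2 : (b i - f i p) / f i d * f i d < (k : ℝ) * f i d :=
      mul_lt_mul_of_pos_right hk h
    rw [div_mul_cancel₀ _ (ne_of_gt h)] at h2
    linarith
  · intro hd p hp i
    rw [map_add]
    have := hp i
    have := hd i
    linarith

lemma recc_equiv_image (e : E ≃ₗ[ℝ] E') (S : Set E) : recc (e '' S) = e '' recc S := by
  ext d
  constructor
  · intro hd
    refine ⟨e.symm d, fun p hp => ?_, by simp⟩
    obtain ⟨w, hw, hw2⟩ := hd (e p) ⟨p, hp, rfl⟩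
    have : p + e.symm d = w := by
      apply e.injective
      rw [map_add]
      simp [hw2]
    rw [this]; exact hw
  · rintro ⟨w, hw, rfl⟩ p ⟨z, hz, rfl⟩
    exact ⟨z + w, hw z hz, by rw [map_add]⟩

lemma recc_prod {A : Set E} {B : Set E'} (hA : A.Nonempty) (hB : B.Nonempty) :
    recc (A ×ˢ B) = recc A ×ˢ recc B := by
  ext d
  constructor
  · intro hd
    obtain ⟨a, ha⟩ := hA
    obtain ⟨b, hb⟩ := hB
    constructor
    · intro p hp
      exact (hd (p, b) ⟨hp, hb⟩).1
    · intro p hp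
      exact (hd (a, p) ⟨ha, hp⟩).2
  · rintro ⟨h1, h2⟩ p ⟨hp1, hp2⟩
    exact ⟨h1 p.1 hp1, h2 p.2 hp2⟩

lemma recc_cone {C : Set E} (hCc : IsConvexCone C) (hC0 : (0 : E) ∈ C) : recc C = C := by
  ext d
  constructor
  · intro hd
    simpa using hd 0 hC0
  · intro hc p hp
    have h1 : (1/2 : ℝ) • p + (1/2 : ℝ) • d ∈ C :=
      hCc.1 hp hc (by norm_num) (by norm_num) (by norm_num)
    have h2 := hCc.2 _ h1 2 (by norm_num)
    have : (2 : ℝ) • ((1/2 : ℝ) • p + (1/2 : ℝ) • d) = p + d := by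
      rw [smul_add, smul_smul, smul_smul]
      norm_num
    rwa [this] at h2

end helpers
section fm

variable {E : Type*} [AddCommGroup E] [Module ℝ E]

lemma fm_core {m : ℕ} (g : Fin m → (E →ₗ[ℝ] ℝ)) (a b : Fin m → ℝ) (x : E) :
    (∃ t : ℝ, ∀ i, g i x + a i * t ≤ b i) ↔
      ((∀ i, a i = 0 → g i x ≤ b i) ∧
       ∀ i j, 0 < a i → a j < 0 →
         a i * g j x - a j * g i x ≤ a i * b j - a j * b i) := by
  classical
  constructor
  · rintro ⟨t, ht⟩
    refine ⟨fun i hi => by have := ht i; rw [hi] at this; linarith, fun i j hi hj => ?_⟩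
    have h1 := mul_le_mul_of_nonneg_left (ht j) hi.le
    have h2 := mul_le_mul_of_nonpos_left (ht i) hj.le
    nlinarith [h1, h2]
  · rintro ⟨h0, hpn⟩
    set lo : Finset (Fin m) := Finset.univ.filter (fun j => a j < 0) with hlo
    set up : Finset (Fin m) := Finset.univ.filter (fun i => 0 < a i) with hup
    set V : Fin m → ℝ := fun j => (b j - g j x) / a j with hV
    have keyVU : ∀ i j, 0 < a i → a j < 0 → V j ≤ V i := by
      intro i j hi hj
      have key := hpn i j hi hj
      have h1 : V j * a j = b j - g j x := div_mul_cancel₀ _ hj.ne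
      have h2 : V i * a i = b i - g i x := div_mul_cancel₀ _ hi.ne'
      have hneg : a i * a j < 0 := mul_neg_of_pos_of_neg hi hj
      by_contra hlt
      push_neg at hlt
      nlinarith [mul_lt_mul_of_neg_left hlt hneg]
    by_cases hL : lo.Nonempty
    · refine ⟨(lo.image V).max' (hL.image V), fun i => ?_⟩
      set t := (lo.image V).max' (hL.image V) with htdef
      rcases lt_trichotomy (a i) 0 with h | h | h
      · have hmem : i ∈ lo := by simp [hlo, h]
        have hle : V i ≤ t := Finset.le_max' _ _ (Finset.mem_image_of_mem V hmem)
        have h1 : V i * a i = b i - g i x := div_mul_cancel₀ _ h.ne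
        nlinarith [mul_le_mul_of_nonpos_left hle h.le]
      · have := h0 i h
        rw [h]
        linarith
      · have hle : t ≤ V i := by
          apply Finset.max'_le
          intro y hy
          obtain ⟨j, hj, rfl⟩ := Finset.mem_image.mp hy
          have hj' : a j < 0 := by simpa [hlo] using hj
          exact keyVU i j h hj'
        have h1 : V i * a i = b i - g i x := div_mul_cancel₀ _ h.ne'
        nlinarith [mul_le_mul_of_nonneg_left hle h.le]
    · have hnol : ∀ j, ¬ a j < 0 := by
        intro j hj
        exact hL ⟨j, by simp [hlo, hj]⟩
      by_cases hU : up.Nonempty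
      · refine ⟨(up.image V).min' (hU.image V), fun i => ?_⟩
        set t := (up.image V).min' (hU.image V) with htdef
        rcases lt_trichotomy (a i) 0 with h | h | h
        · exact absurd h (hnol i)
        · have := h0 i h
          rw [h]
          linarith
        · have hmem : i ∈ up := by simp [hup, h]
          have hle : t ≤ V i := Finset.min'_le _ _ (Finset.mem_image_of_mem V hmem)
          have h1 : V i * a i = b i - g i x := div_mul_cancel₀ _ h.ne'
          nlinarith [mul_le_mul_of_nonneg_left hle h.le]
      · refine ⟨0, fun i => ?_⟩
        have hz : a i = 0 := by
          rcases lt_trichotomy (a i) 0 with h | h | h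
          · exact absurd h (hnol i)
          · exact h
          · exact absurd (⟨i, by simp [hup, h]⟩ : up.Nonempty) hU
        rw [hz]
        have := h0 i hz
        linarith

end fm
section projone

variable {E : Type*} [AddCommGroup E] [Module ℝ E]

open Classical in
noncomputable def fmF {m : ℕ} (g : Fin m → (E →ₗ[ℝ] ℝ)) (a : Fin m → ℝ) :
    Fin m ⊕ (Fin m × Fin m) → (E →ₗ[ℝ] ℝ)
  | .inl i => if a i = 0 then g i else 0
  | .inr (i, j) => if 0 < a i ∧ a j < 0 then a i • g j - a j • g i else 0

open Classical in
noncomputable def fmB {m : ℕ} (a b : Fin m → ℝ) : Fin m ⊕ (Fin m × Fin m) → ℝ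
  | .inl i => if a i = 0 then b i else 0
  | .inr (i, j) => if 0 < a i ∧ a j < 0 then a i * b j - a j * b i else 0

lemma fmB_zero {m : ℕ} (a : Fin m → ℝ) : fmB a (fun _ => (0 : ℝ)) = fun _ => (0 : ℝ) := by
  funext k
  rcases k with i | ⟨i, j⟩ <;> simp [fmB]

lemma fm_rep {m : ℕ} (g : Fin m → (E →ₗ[ℝ] ℝ)) (a b : Fin m → ℝ) :
    {x : E | ∃ t : ℝ, ∀ i, g i x + a i * t ≤ b i}
      = {x : E | ∀ k, fmF g a k x ≤ fmB a b k} := by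
  ext x
  rw [mem_setOf_eq, mem_setOf_eq, fm_core g a b x]
  constructor
  · rintro ⟨h0, hpn⟩ k
    rcases k with i | ⟨i, j⟩
    · by_cases h : a i = 0
      · simpa [fmF, fmB, h] using h0 i h
      · simp [fmF, fmB, h]
    · by_cases h : 0 < a i ∧ a j < 0
      · have := hpn i j h.1 h.2
        simpa [fmF, fmB, h, LinearMap.sub_apply, LinearMap.smul_apply, smul_eq_mul] using this
      · simp [fmF, fmB, h]
  · intro h
    constructor
    · intro i hi
      have := h (.inl i)
      simpa [fmF, fmB, hi] using this
    · intro i j hi hj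
      have := h (.inr (i, j))
      simpa [fmF, fmB, hi, hj, LinearMap.sub_apply, LinearMap.smul_apply, smul_eq_mul] using this

lemma proj_one (A : Set (E × ℝ)) (hA : IsPolyhedron A) (hne : A.Nonempty) :
    IsPolyhedron (Prod.fst '' A) ∧ recc (Prod.fst '' A) = Prod.fst '' recc A := by
  classical
  obtain ⟨m, f, b, rfl⟩ := hA
  set g : Fin m → (E →ₗ[ℝ] ℝ) := fun i => (f i).comp (LinearMap.inl ℝ E ℝ) with hg
  set a : Fin m → ℝ := fun i => f i (0, 1) with ha
  have hdec : ∀ (i : Fin m) (x : E) (t : ℝ), f i (x, t) = g i x + a i * t := by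
    intro i x t
    have hxt : (x, t) = ((x, 0) : E × ℝ) + t • ((0 : E), (1 : ℝ)) := by
      simp [Prod.ext_iff]
    rw [hxt, map_add, _root_.map_smul, smul_eq_mul]
    simp [hg, ha, LinearMap.inl_apply, mul_comm]
  have himg : ∀ b' : Fin m → ℝ,
      Prod.fst '' {p : E × ℝ | ∀ i, f i p ≤ b' i} = {x : E | ∃ t : ℝ, ∀ i, g i x + a i * t ≤ b' i} := by
    intro b'
    ext x
    simp only [mem_image, mem_setOf_eq]
    constructor
    · rintro ⟨⟨x', t⟩, hp, rfl⟩
      exact ⟨t, fun i => by rw [← hdec]; exact hp i⟩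
    · rintro ⟨t, ht⟩
      exact ⟨(x, t), fun i => by rw [hdec]; exact ht i, rfl⟩
  have hPne : (Prod.fst '' {p : E × ℝ | ∀ i, f i p ≤ b i}).Nonempty := hne.image _
  have hrep : Prod.fst '' {p : E × ℝ | ∀ i, f i p ≤ b i}
      = {x : E | ∀ k, fmF g a k x ≤ fmB a b k} := by
    rw [himg b, fm_rep]
  constructor
  · rw [hrep]
    exact isPolyhedron_of_fintype _ _
  · rw [hrep]
    rw [recc_setOf _ _ (hrep ▸ hPne)]
    rw [recc_setOf f b hne]
    rw [himg (fun _ => 0), fm_rep]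
    rw [fmB_zero a]

end projone
section projmany

variable {E : Type*} [AddCommGroup E] [Module ℝ E]

noncomputable def stepEquiv (N : ℕ) (E : Type*) [AddCommGroup E] [Module ℝ E] :
    ((Fin (N + 1) → ℝ) × E) ≃ₗ[ℝ] (((Fin N → ℝ) × E) × ℝ) where
  toFun p := ((Fin.init p.1, p.2), p.1 (Fin.last N))
  invFun q := (Fin.snoc q.1.1 q.2, q.1.2)
  map_add' p q := by
    simp [Prod.ext_iff, Fin.init]
    rfl
  map_smul' c p := by
    simp [Prod.ext_iff, Fin.init]
    rfl
  left_inv p := by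
    simp [Prod.ext_iff, Fin.snoc_init_self]
  right_inv q := by
    simp [Prod.ext_iff, Fin.init_snoc, Fin.snoc_last]

lemma proj_many : ∀ (N : ℕ) (A : Set ((Fin N → ℝ) × E)), IsPolyhedron A → A.Nonempty →
    IsPolyhedron (Prod.snd '' A) ∧ recc (Prod.snd '' A) = Prod.snd '' recc A := by
  intro N
  induction N with
  | zero =>
      intro A hA hne
      have hset : Prod.snd '' A = (LinearMap.inr ℝ (Fin 0 → ℝ) E) ⁻¹' A := by
        ext x
        simp only [mem_image, mem_preimage, LinearMap.inr_apply]
        constructor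
        · rintro ⟨⟨v, y⟩, hp, rfl⟩
          have : ((0 : Fin 0 → ℝ), y) = (v, y) := by
            rw [Prod.ext_iff]
            exact ⟨Subsingleton.elim _ _, rfl⟩
          rw [this]
          exact hp
        · intro h
          exact ⟨(0, x), h, rfl⟩
      constructor
      · rw [hset]; exact hA.preimage _
      · ext d
        constructor
        · intro hd
          refine ⟨(0, d), fun p hp => ?_, rfl⟩
          obtain ⟨w, hw, hw2⟩ := hd p.2 ⟨p, hp, rfl⟩
          have : p + (0, d) = w := by
            rw [Prod.ext_iff]
            exact ⟨Subsingleton.elim _ _, by simp [hw2]⟩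
          rw [this]
          exact hw
        · rintro ⟨w, hw, rfl⟩ p ⟨z, hz, rfl⟩
          exact ⟨z + w, hw z hz, rfl⟩
  | succ N ih =>
      intro A hA hne
      set e := stepEquiv N E with he
      have h1 := proj_one (e '' A) (hA.image_equiv e) (hne.image _)
      have h2 := ih (Prod.fst '' (e '' A)) h1.1 ((hne.image _).image _)
      have hcomp : ∀ S : Set ((Fin (N + 1) → ℝ) × E),
          Prod.snd '' S = Prod.snd '' (Prod.fst '' (e '' S)) := by
        intro S
        rw [Set.image_image, Set.image_image]
        rfl
      constructor
      · rw [hcomp A]; exact h2.1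
      · rw [hcomp A, h2.2, h1.2, recc_equiv_image, ← hcomp (recc A)]

end projmany
section main

noncomputable def mainEquiv (n q : ℕ) :
    (((Fin n → ℝ) × (Fin q → ℝ)) × (Fin q → ℝ)) ≃ₗ[ℝ]
      ((Fin n → ℝ) × ((Fin q → ℝ) × (Fin q → ℝ))) where
  toFun p := (p.1.1, (p.1.2, p.2 + p.1.2))
  invFun w := ((w.1, w.2.1), w.2.2 - w.2.1)
  map_add' p q := by
    simp [Prod.ext_iff]
    abel
  map_smul' c p := by
    simp [Prod.ext_iff, smul_add]
  left_inv p := by simp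
  right_inv w := by simp

lemma key_img {n q : ℕ} (S : Set ((Fin n → ℝ) × (Fin q → ℝ))) (T : Set (Fin q → ℝ)) :
    Prod.snd '' (Prod.snd '' ((mainEquiv n q) '' (S ×ˢ T)))
      = T + ⋃ x, {y | (x, y) ∈ S} := by
  rw [Set.image_image, Set.image_image]
  ext p
  simp only [mem_image, mem_prod, mem_setOf_eq, Set.mem_add, mem_iUnion]
  constructor
  · rintro ⟨⟨⟨x, y⟩, c⟩, ⟨hS, hT⟩, rfl⟩
    exact ⟨c, hT, y, ⟨x, hS⟩, rfl⟩
  · rintro ⟨c, hT, y, ⟨x, hS⟩, rfl⟩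
    exact ⟨((x, y), c), ⟨hS, hT⟩, rfl⟩

theorem stmt4 {n q : ℕ} (F G : (Fin n → ℝ) → Set (Fin q → ℝ)) (C : Set (Fin q → ℝ))
    (hF : IsPolyhedron (graphOf F)) (hne : (graphOf F).Nonempty)
    (hG : graphOf G = recc (graphOf F))
    (hCp : IsPolyhedron C) (hCc : IsConvexCone C) (hC0 : (0 : Fin q → ℝ) ∈ C)
    (hPne : (C + ⋃ x, F x).Nonempty) :
    recc (C + ⋃ x, F x) = C + ⋃ x, G x := by
  classical
  have hCne : C.Nonempty := ⟨0, hC0⟩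
  set e₀ := mainEquiv n q with he₀
  set A : Set (((Fin n → ℝ) × (Fin q → ℝ)) × (Fin q → ℝ)) := graphOf F ×ˢ C with hAdef
  have hApoly : IsPolyhedron A := hF.prod hCp
  have hAne : A.Nonempty := hne.prod hCne
  have hgr : ∀ (H : (Fin n → ℝ) → Set (Fin q → ℝ)),
      (⋃ x, {y | (x, y) ∈ graphOf H}) = ⋃ x, H x := by
    intro H
    rfl
  have hP : C + ⋃ x, F x = Prod.snd '' (Prod.snd '' (e₀ '' A)) := by
    rw [hAdef, key_img, hgr]
  have h1 := proj_many n (e₀ '' A) (hApoly.image_equiv e₀) (hAne.image _)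
  have h2 := proj_many q (Prod.snd '' (e₀ '' A)) h1.1 ((hAne.image _).image _)
  have hreccA : recc A = graphOf G ×ˢ C := by
    rw [hAdef, recc_prod hne hCne, ← hG, recc_cone hCc hC0]
  rw [hP, h2.2, h1.2, recc_equiv_image, hreccA, key_img, hgr]

end main
end

section
/- A linear program max{cᵀx : Ax ≤ b} has an optimal solution if and only if it is feasible and its homogeneous problem max{cᵀx : Ax ≤ 0} is bounded (i.e., cᵀx ≤ 0 for all x with Ax ≤ 0). -/
open Set Matrix Pointwise RealInnerProductSpace

lemma dot_decomp {n : ℕ} (u x : Fin (n+1) → ℝ) :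
    u ⬝ᵥ x = Fin.init u ⬝ᵥ Fin.init x + u (Fin.last n) * x (Fin.last n) := by
  simp [dotProduct, Fin.sum_univ_castSucc, Fin.init]

lemma dot_snoc {n : ℕ} (u : Fin (n+1) → ℝ) (y : Fin n → ℝ) (t : ℝ) :
    u ⬝ᵥ Fin.snoc y t = Fin.init u ⬝ᵥ y + u (Fin.last n) * t := by
  rw [dot_decomp]
  simp

lemma fmStep {ι : Type} [Fintype ι] {n : ℕ} (M : ι → Fin (n+1) → ℝ) :
    ∃ (κ : Type) (_ : Fintype κ) (N : κ → Fin n → ℝ) (L : κ → ι → ℝ),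
      (∀ j i, 0 ≤ L j i) ∧
      (∀ j x, N j ⬝ᵥ Fin.init x = ∑ i, L j i * (M i ⬝ᵥ x)) ∧
      (∀ (b : ι → ℝ) (y : Fin n → ℝ), (∀ j, N j ⬝ᵥ y ≤ ∑ i, L j i * b i) →
        ∃ t, ∀ i, M i ⬝ᵥ Fin.snoc y t ≤ b i) := by
  classical
  set a : ι → ℝ := fun i => M i (Fin.last n) with ha
  set v : ι → Fin n → ℝ := fun i => Fin.init (M i) with hv
  refine ⟨{i // a i = 0} ⊕ ({i // 0 < a i} × {i // a i < 0}), inferInstance,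
    Sum.elim (fun i => v i.1) (fun pq => (-(a pq.2.1)) • v pq.1.1 + (a pq.1.1) • v pq.2.1),
    Sum.elim (fun i => Pi.single i.1 1)
      (fun pq i => (if i = pq.1.1 then -(a pq.2.1) else 0) +
        (if i = pq.2.1 then a pq.1.1 else 0)),
    ?_, ?_, ?_⟩
  · rintro (⟨i0, h0⟩ | ⟨⟨p, hp⟩, ⟨q, hq⟩⟩) i
    · simp [Pi.single_apply]
      split <;> norm_num
    · simp only [Sum.elim_inr]
      have h1 : (0:ℝ) ≤ (if i = p then -(a q) else 0) := by split <;> [linarith; rfl]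
      have h2 : (0:ℝ) ≤ (if i = q then a p else 0) := by split <;> [linarith; rfl]
      linarith
  · rintro (⟨i0, h0⟩ | ⟨⟨p, hp⟩, ⟨q, hq⟩⟩) x
    · simp only [Sum.elim_inl, Pi.single_apply, ite_mul, one_mul, zero_mul]
      rw [Finset.sum_ite_eq' Finset.univ i0]
      simp only [Finset.mem_univ, if_true]
      rw [dot_decomp (M i0) x]
      have : M i0 (Fin.last n) = 0 := h0
      simp [this, hv]
    · simp only [Sum.elim_inr, add_mul, Finset.sum_add_distrib, ite_mul, zero_mul]
      rw [Finset.sum_ite_eq' Finset.univ p, Finset.sum_ite_eq' Finset.univ q]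
      simp only [Finset.mem_univ, if_true]
      rw [dot_decomp (M p) x, dot_decomp (M q) x]
      have e1 : M p (Fin.last n) = a p := rfl
      have e2 : M q (Fin.last n) = a q := rfl
      rw [add_dotProduct, smul_dotProduct, smul_dotProduct, e1, e2]
      show -(a q) * (Fin.init (M p) ⬝ᵥ Fin.init x) + a p * (Fin.init (M q) ⬝ᵥ Fin.init x) = _
      ring
  · intro b y h
    set r : ι → ℝ := fun i => (b i - v i ⬝ᵥ y) / a i with hr
    have hzero : ∀ i, a i = 0 → v i ⬝ᵥ y ≤ b i := by
      intro i hi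
      have := h (Sum.inl ⟨i, hi⟩)
      simpa [Pi.single_apply, ite_mul, one_mul, zero_mul,
        Finset.sum_ite_eq' Finset.univ i] using this
    have hpair : ∀ (p q : ι), 0 < a p → a q < 0 → r q ≤ r p := by
      intro p q hp hq
      have H := h (Sum.inr (⟨p, hp⟩, ⟨q, hq⟩))
      simp only [Sum.elim_inr, add_mul, Finset.sum_add_distrib, ite_mul, zero_mul,
        Finset.sum_ite_eq' Finset.univ, Finset.mem_univ, if_true,
        add_dotProduct, smul_dotProduct, smul_eq_mul] at H
      have hq' : (0:ℝ) < -(a q) := by linarith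
      have goal2 : (-(b q - v q ⬝ᵥ y)) / (-(a q)) ≤ (b p - v p ⬝ᵥ y) / (a p) := by
        rw [div_le_div_iff₀ hq' hp]
        nlinarith [H]
      rw [neg_div_neg_eq] at goal2
      exact goal2
    set S := Finset.univ.filter (fun i => a i < 0) with hS
    set P := Finset.univ.filter (fun i => 0 < a i) with hP
    have key : ∀ t, (∀ i, a i * t ≤ b i - v i ⬝ᵥ y) → ∀ i, M i ⬝ᵥ Fin.snoc y t ≤ b i := by
      intro t ht i
      rw [dot_snoc]
      have e : M i (Fin.last n) = a i := rfl
      have e2 : Fin.init (M i) = v i := rfl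
      rw [e, e2]
      linarith [ht i]
    have hmul : ∀ i t, a i ≠ 0 → ((a i * t ≤ b i - v i ⬝ᵥ y) ↔
        (0 < a i → t ≤ r i) ∧ (a i < 0 → r i ≤ t)) := by
      intro i t hne
      rcases hne.lt_or_gt with hlt | hgt
      · constructor
        · intro hle
          refine ⟨fun h' => absurd h' (not_lt.mpr hlt.le), fun _ => ?_⟩
          rw [hr]
          rw [div_le_iff_of_neg hlt]
          linarith
        · intro ⟨_, h2⟩
          have := h2 hlt
          rw [hr, div_le_iff_of_neg hlt] at this
          linarith
      · constructor
        · intro hle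
          refine ⟨fun _ => ?_, fun h' => absurd h' (not_lt.mpr hgt.le)⟩
          rw [hr, le_div_iff₀ hgt]
          linarith
        · intro ⟨h1, _⟩
          have := h1 hgt
          rw [hr, le_div_iff₀ hgt] at this
          linarith
    by_cases hSne : S.Nonempty
    · refine ⟨S.sup' hSne r, key _ ?_⟩
      intro i
      rcases lt_trichotomy (a i) 0 with hlt | heq | hgt
      · rw [hmul i _ (ne_of_lt hlt)]
        exact ⟨fun h' => absurd h' (not_lt.mpr hlt.le),
          fun _ => Finset.le_sup' r (by simp [hS, hlt])⟩
      · have := hzero i heq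
        rw [heq]
        linarith
      · rw [hmul i _ (ne_of_gt hgt)]
        refine ⟨fun _ => ?_, fun h' => absurd h' (not_lt.mpr hgt.le)⟩
        obtain ⟨q, hqS, hq⟩ := Finset.exists_mem_eq_sup' hSne r
        have hqneg : a q < 0 := by simp [hS] at hqS; exact hqS
        rw [hq]
        exact hpair i q hgt hqneg
    · by_cases hPne : P.Nonempty
      · refine ⟨P.inf' hPne r, key _ ?_⟩
        intro i
        rcases lt_trichotomy (a i) 0 with hlt | heq | hgt
        · exact absurd ⟨i, by simp [hS, hlt]⟩ hSne
        · have := hzero i heq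
          rw [heq]
          linarith
        · rw [hmul i _ (ne_of_gt hgt)]
          exact ⟨fun _ => Finset.inf'_le r (by simp [hP, hgt]),
            fun h' => absurd h' (not_lt.mpr hgt.le)⟩
      · refine ⟨0, key _ ?_⟩
        intro i
        rcases lt_trichotomy (a i) 0 with hlt | heq | hgt
        · exact absurd ⟨i, by simp [hS, hlt]⟩ hSne
        · have := hzero i heq
          rw [heq]
          linarith
        · exact absurd ⟨i, by simp [hP, hgt]⟩ hPne

lemma fullElim : ∀ (n : ℕ) {ι : Type} [Fintype ι] (M : ι → Fin n → ℝ),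
    ∃ (κ : Type) (_ : Fintype κ) (L : κ → ι → ℝ),
      (∀ j i, 0 ≤ L j i) ∧
      (∀ j (x : Fin n → ℝ), ∑ i, L j i * (M i ⬝ᵥ x) = 0) ∧
      (∀ b : ι → ℝ, (∀ j, 0 ≤ ∑ i, L j i * b i) → ∃ x, ∀ i, M i ⬝ᵥ x ≤ b i) := by
  intro n
  induction n with
  | zero =>
    intro ι _ M
    classical
    refine ⟨ι, inferInstance, fun j i => if i = j then 1 else 0, ?_, ?_, ?_⟩
    · intro j i
      simp only
      split <;> norm_num
    · intro j x
      have : M j ⬝ᵥ x = 0 := by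
        simp [dotProduct]
      simp [ite_mul, Finset.sum_ite_eq' Finset.univ, this]
    · intro b hb
      refine ⟨0, fun i => ?_⟩
      have := hb i
      simp [ite_mul, Finset.sum_ite_eq' Finset.univ] at this
      simpa [dotProduct] using this
  | succ n ih =>
    intro ι _ M
    classical
    obtain ⟨κ₁, _, N, L₁, hL₁0, hC1, hC2⟩ := fmStep M
    obtain ⟨κ₂, _, L₂, hL₂0, hD1, hD2⟩ := ih N
    refine ⟨κ₂, inferInstance, fun j i => ∑ p, L₂ j p * L₁ p i, ?_, ?_, ?_⟩
    · intro j i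
      exact Finset.sum_nonneg fun p _ => mul_nonneg (hL₂0 j p) (hL₁0 p i)
    · intro j x
      have swap : ∑ i, (∑ p, L₂ j p * L₁ p i) * (M i ⬝ᵥ x)
          = ∑ p, L₂ j p * ∑ i, L₁ p i * (M i ⬝ᵥ x) := by
        calc ∑ i, (∑ p, L₂ j p * L₁ p i) * (M i ⬝ᵥ x)
            = ∑ i, ∑ p, L₂ j p * (L₁ p i * (M i ⬝ᵥ x)) := by
              refine Finset.sum_congr rfl fun i _ => ?_
              rw [Finset.sum_mul]
              exact Finset.sum_congr rfl fun p _ => by ring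
          _ = ∑ p, ∑ i, L₂ j p * (L₁ p i * (M i ⬝ᵥ x)) := Finset.sum_comm
          _ = ∑ p, L₂ j p * ∑ i, L₁ p i * (M i ⬝ᵥ x) := by
              exact Finset.sum_congr rfl fun p _ => (Finset.mul_sum _ _ _).symm
      rw [swap]
      simp_rw [← hC1]
      exact hD1 j (Fin.init x)
    · intro b hb
      have hb' : ∀ j, 0 ≤ ∑ p, L₂ j p * (∑ i, L₁ p i * b i) := by
        intro j
        have := hb j
        calc (0:ℝ) ≤ ∑ i, (∑ p, L₂ j p * L₁ p i) * b i := this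
        _ = ∑ i, ∑ p, L₂ j p * (L₁ p i * b i) := by
            refine Finset.sum_congr rfl fun i _ => ?_
            rw [Finset.sum_mul]
            exact Finset.sum_congr rfl fun p _ => by ring
        _ = ∑ p, ∑ i, L₂ j p * (L₁ p i * b i) := Finset.sum_comm
        _ = ∑ p, L₂ j p * (∑ i, L₁ p i * b i) := by
            exact Finset.sum_congr rfl fun p _ => (Finset.mul_sum _ _ _).symm
      obtain ⟨y, hy⟩ := hD2 (fun p => ∑ i, L₁ p i * b i) hb'
      obtain ⟨t, ht⟩ := hC2 b y hy
      exact ⟨Fin.snoc y t, ht⟩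

theorem stmt7' {m n : ℕ} (A : Matrix (Fin m) (Fin n) ℝ) (b : Fin m → ℝ) (c : Fin n → ℝ) :
    (∃ x : Fin n → ℝ, (∀ i, A.mulVec x i ≤ b i) ∧
        ∀ y : Fin n → ℝ, (∀ i, A.mulVec y i ≤ b i) → c ⬝ᵥ y ≤ c ⬝ᵥ x) ↔
      ((∃ x : Fin n → ℝ, ∀ i, A.mulVec x i ≤ b i) ∧
        ∀ x : Fin n → ℝ, (∀ i, A.mulVec x i ≤ 0) → c ⬝ᵥ x ≤ 0) := by
  classical
  have hmv : ∀ (x : Fin n → ℝ) i, A.mulVec x i = A i ⬝ᵥ x := fun x i => rfl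
  constructor
  · rintro ⟨x, hx, hopt⟩
    refine ⟨⟨x, hx⟩, fun d hd => ?_⟩
    have hfeas : ∀ i, A.mulVec (x + d) i ≤ b i := by
      intro i
      have : A.mulVec (x + d) i = A.mulVec x i + A.mulVec d i := by
        rw [Matrix.mulVec_add]; rfl
      rw [this]
      linarith [hx i, hd i]
    have h1 := hopt (x + d) hfeas
    have h2 : c ⬝ᵥ (x + d) = c ⬝ᵥ x + c ⬝ᵥ d := dotProduct_add c x d
    linarith
  · rintro ⟨⟨x₀, hx₀⟩, hbdd⟩
    set M : (Fin m ⊕ Unit) → Fin n → ℝ := Sum.elim (fun i => A i) (fun _ => -c) with hM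
    obtain ⟨κ, _, L, hL0, hE1, hE2⟩ := fullElim n M
    set lam : κ → ℝ := fun j => L j (Sum.inr ()) with hlam
    set beta : κ → ℝ := fun j => ∑ i, L j (Sum.inl i) * b i with hbeta
    have back : ∀ (x : Fin n → ℝ), (∀ i, A.mulVec x i ≤ b i) →
        ∀ j, lam j * (c ⬝ᵥ x) ≤ beta j := by
      intro x hx j
      have h0 := hE1 j x
      rw [Fintype.sum_sum_type] at h0
      simp only [hM, Sum.elim_inl, Sum.elim_inr, Finset.univ_unique, Finset.sum_singleton,
        neg_dotProduct, mul_neg] at h0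
      have hdef : L j (Sum.inr default) = lam j := rfl
      rw [hdef] at h0
      have heq : lam j * (c ⬝ᵥ x) = ∑ i, L j (Sum.inl i) * (A i ⬝ᵥ x) := by linarith
      rw [heq, hbeta]
      refine Finset.sum_le_sum fun i _ => ?_
      exact mul_le_mul_of_nonneg_left (by rw [← hmv]; exact hx i) (hL0 j (Sum.inl i))
    have fwd : ∀ (bb : Fin m → ℝ) (t : ℝ),
        (∀ j, lam j * t ≤ ∑ i, L j (Sum.inl i) * bb i) →
        ∃ x, (∀ i, A.mulVec x i ≤ bb i) ∧ t ≤ c ⬝ᵥ x := by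
      intro bb t hj
      have hcond : ∀ j, 0 ≤ ∑ i, L j i * (Sum.elim bb (fun _ => -t) i) := by
        intro j
        rw [Fintype.sum_sum_type]
        simp only [Sum.elim_inl, Sum.elim_inr, Finset.univ_unique, Finset.sum_singleton]
        have h1 := hj j
        have hdef : L j (Sum.inr default) = lam j := rfl
        rw [hdef]
        linarith
      obtain ⟨x, hx⟩ := hE2 (Sum.elim bb (fun _ => -t)) hcond
      refine ⟨x, fun i => by rw [hmv]; exact hx (Sum.inl i), ?_⟩
      have := hx (Sum.inr ())
      simp only [hM, Sum.elim_inl, Sum.elim_inr, neg_dotProduct] at this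
      linarith
    set Jpos := Finset.univ.filter (fun j => 0 < lam j) with hJ
    by_cases hne : Jpos.Nonempty
    · set g : κ → ℝ := fun j => beta j / lam j with hg
      set s := Jpos.inf' hne g with hs
      have hlampos : ∀ j ∈ Jpos, 0 < lam j := fun j hj => (Finset.mem_filter.1 hj).2
      have ht₀ : c ⬝ᵥ x₀ ≤ s := by
        obtain ⟨j', hj'S, hj'⟩ := Finset.exists_mem_eq_inf' hne g
        rw [hs, hj', hg]
        rw [le_div_iff₀ (hlampos j' hj'S)]
        have := back x₀ hx₀ j'
        linarith
      have hsat : ∀ j, lam j * s ≤ beta j := by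
        intro j
        by_cases hjp : j ∈ Jpos
        · have h1 : s ≤ g j := Finset.inf'_le g hjp
          have h2 : 0 < lam j := hlampos j hjp
          have : lam j * s ≤ lam j * g j := mul_le_mul_of_nonneg_left h1 h2.le
          have h3 : lam j * g j = beta j := by
            rw [hg, mul_comm, div_mul_cancel₀]
            exact ne_of_gt h2
          linarith
        · have hjle : lam j ≤ 0 := by
            by_contra h
            exact hjp (Finset.mem_filter.2 ⟨Finset.mem_univ j, lt_of_not_ge h⟩)
          have h1 : lam j * s ≤ lam j * (c ⬝ᵥ x₀) :=
            mul_le_mul_of_nonpos_left ht₀ hjle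
          have h2 := back x₀ hx₀ j
          linarith
      obtain ⟨xs, hxs, hcs⟩ := fwd b s hsat
      refine ⟨xs, hxs, fun y hy => ?_⟩
      have hy' : c ⬝ᵥ y ≤ s := by
        refine Finset.le_inf' hne g fun j hj => ?_
        rw [hg, le_div_iff₀ (hlampos j hj)]
        have := back y hy j
        linarith
      linarith
    · exfalso
      have hall : ∀ j, lam j ≤ 0 := by
        intro j
        by_contra h
        exact hne ⟨j, Finset.mem_filter.2 ⟨Finset.mem_univ j, lt_of_not_ge h⟩⟩
      obtain ⟨x, hx, hcx⟩ := fwd 0 1 (fun j => by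
        simp only [Pi.zero_apply, mul_zero, Finset.sum_const_zero, mul_one]
        exact hall j)
      have := hbdd x (fun i => by simpa using hx i)
      linarith

theorem stmt7 {m n : ℕ} (A : Matrix (Fin m) (Fin n) ℝ) (b : Fin m → ℝ) (c : Fin n → ℝ) :
    (∃ x : Fin n → ℝ, (∀ i, A.mulVec x i ≤ b i) ∧
        ∀ y : Fin n → ℝ, (∀ i, A.mulVec y i ≤ b i) → c ⬝ᵥ y ≤ c ⬝ᵥ x) ↔
      ((∃ x : Fin n → ℝ, ∀ i, A.mulVec x i ≤ b i) ∧
        ∀ x : Fin n → ℝ, (∀ i, A.mulVec x i ≤ 0) → c ⬝ᵥ x ≤ 0) := stmt7' A b c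
end

section
/- Let F : ℝⁿ ⇉ ℝ^q be polyhedral convex with recession mapping G, and C ⊆ ℝ^q a polyhedral convex cone. Define F_std(x) = F(x) + C, C_std = C + G(0), and G_std as the recession mapping of F_std. Then for every x ∈ ℝⁿ: F(x) + C = F_std(x) + C_std and G(x) + C = G_std(x) + C_std. Consequently, a point x̄ ∈ dom F is a minimizer for (F,C) if and only if it is a minimizer for (F_std, C_std). -/
/-!
The recession cone of a nonempty polyhedron `{x | f x ≤ b}` is `{x | f x ≤ 0}`. Fourier–Motzkin
elimination describes the projection of `{(x, y) | h (x, y) ≤ b}` as `{x | f x ≤ e b}` with `e`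
linear, so setting `b = 0` shows that the recession cone of the projection is the projection of the
recession cone. The graph of `x ↦ F x + C` is the projection of the polyhedron
`{((x, y), u) | (x, u) ∈ gr F, y - u ∈ C}`, whence `G_std x = G x + recc C = G x + C`. The remaining
identities are absorption: `G 0` consists of recession directions of every `F x` and `G x`, and
`C + C ⊆ C`.
-/

open Set Matrix Pointwise RealInnerProductSpace

universe u

lemma exists_forall_le_forall_le_of_finite {α : Type*} [ConditionallyCompleteLattice α]
    [Nonempty α] {s t : Set α} (hs : s.Finite) (ht : t.Finite)
    (h : ∀ x ∈ s, ∀ y ∈ t, x ≤ y) : ∃ z, (∀ x ∈ s, x ≤ z) ∧ ∀ y ∈ t, z ≤ y := by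
  rcases s.eq_empty_or_nonempty with rfl | hne
  · obtain ⟨z, hz⟩ := ht.bddBelow
    exact ⟨z, by simp, fun y hy => hz hy⟩
  · exact ⟨sSup s, fun x hx => le_csSup hs.bddAbove hx,
      fun y hy => csSup_le hne fun x hx => h x hx y hy⟩

lemma exists_forall_mul_le_iff {ι : Type*} [Finite ι] (a c : ι → ℝ) :
    (∃ t, ∀ i, a i * t ≤ c i) ↔
      (∀ i, a i = 0 → 0 ≤ c i) ∧ ∀ i j, 0 < a i → a j < 0 → a j * c i ≤ a i * c j := by
  constructor
  · rintro ⟨t, ht⟩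
    exact ⟨fun i hi => by simpa [hi] using ht i, fun i j hi hj => by nlinarith [ht i, ht j]⟩
  rintro ⟨hzero, hpair⟩
  obtain ⟨t, hlo, hhi⟩ := exists_forall_le_forall_le_of_finite
    ((toFinite {j | a j < 0}).image fun j => c j / a j)
    ((toFinite {i | 0 < a i}).image fun i => c i / a i) <| by
      rintro _ ⟨j, hj, rfl⟩ _ ⟨i, hi, rfl⟩
      rw [div_le_iff_of_neg hj, div_mul_eq_mul_div, div_le_iff₀ hi]
      linarith [hpair i j hi hj]
  refine ⟨t, fun i => ?_⟩
  rcases lt_trichotomy (a i) 0 with hi | hi | hi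
  · exact (div_le_iff_of_neg' hi).1 (hlo _ ⟨i, hi, rfl⟩)
  · simpa [hi] using hzero i hi
  · exact (le_div_iff₀' hi).1 (hhi _ ⟨i, hi, rfl⟩)

lemma exists_linearMap_forall_mul_le_iff {ι : Type u} [Fintype ι] (a : ι → ℝ) :
    ∃ (κ : Type u) (_ : Fintype κ) (L : κ → (ι → ℝ) →ₗ[ℝ] ℝ),
      ∀ c, (∃ t, ∀ i, a i * t ≤ c i) ↔ ∀ k, 0 ≤ L k c := by
  classical
  refine ⟨{i // a i = 0} ⊕ {p : ι × ι // 0 < a p.1 ∧ a p.2 < 0}, inferInstance,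
    Sum.elim (fun i => LinearMap.proj i.1)
      (fun p => a p.1.1 • LinearMap.proj p.1.2 - a p.1.2 • LinearMap.proj p.1.1), fun c => ?_⟩
  simp [exists_forall_mul_le_iff, Sum.forall]

def Fin.consZeroLinearMap (q : ℕ) : (Fin q → ℝ) →ₗ[ℝ] (Fin (q + 1) → ℝ) :=
  LinearMap.pi (Fin.cons 0 LinearMap.proj)

lemma Fin.cons_eq_consZeroLinearMap_add {q : ℕ} (t : ℝ) (y : Fin q → ℝ) :
    (Fin.cons t y : Fin (q + 1) → ℝ) = Fin.consZeroLinearMap q y + t • Pi.single 0 1 := by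
  funext j
  refine Fin.cases ?_ (fun j => ?_) j <;> simp [Fin.consZeroLinearMap]

lemma exists_forall_le_iff_of_fin (E : Type*) [AddCommGroup E] [Module ℝ E] (q : ℕ) :
    ∀ {ι : Type u} [Fintype ι] (h : ι → E × (Fin q → ℝ) →ₗ[ℝ] ℝ),
      ∃ (κ : Type u) (_ : Fintype κ) (f : κ → E →ₗ[ℝ] ℝ) (e : κ → (ι → ℝ) →ₗ[ℝ] ℝ),
        ∀ b x, (∃ y, ∀ i, h i (x, y) ≤ b i) ↔ ∀ k, f k x ≤ e k b := by
  induction q with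
  | zero =>
    intro ι _ h
    refine ⟨ι, inferInstance, fun i => h i ∘ₗ LinearMap.inl ℝ E _, LinearMap.proj, fun b x => ?_⟩
    refine ⟨fun ⟨y, hy⟩ => ?_, fun hx => ⟨0, hx⟩⟩
    rwa [Subsingleton.elim y 0] at hy
  | succ q ih =>
    intro ι _ h
    set a : ι → ℝ := fun i => h i (0, Pi.single 0 1)
    set h' : ι → E × (Fin q → ℝ) →ₗ[ℝ] ℝ :=
      fun i => h i ∘ₗ LinearMap.prodMap LinearMap.id (Fin.consZeroLinearMap q)
    have hsplit : ∀ i x t y, h i (x, Fin.cons t y) = a i * t + h' i (x, y) := by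
      intro i x t y
      have hxy : ((x, Fin.cons t y) : E × (Fin (q + 1) → ℝ))
          = (x, Fin.consZeroLinearMap q y) + t • (0, Pi.single 0 1) := by
        simp [Fin.cons_eq_consZeroLinearMap_add]
      rw [hxy, map_add, map_smul, smul_eq_mul, add_comm, mul_comm]
      rfl
    obtain ⟨κ, _, L, hL⟩ := exists_linearMap_forall_mul_le_iff a
    obtain ⟨μ, _, f, e, hfe⟩ := ih fun k => L k ∘ₗ LinearMap.pi h'
    refine ⟨μ, inferInstance, f, fun m => e m ∘ₗ LinearMap.pi L, fun b x => ?_⟩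
    have helim : (∃ y, ∀ i, h i (x, y) ≤ b i) ↔
        ∃ y, ∀ k, (L k ∘ₗ LinearMap.pi h') (x, y) ≤ L k b := by
      rw [Fin.exists_fin_succ_pi, exists_comm]
      refine exists_congr fun y => ?_
      simp only [hsplit, ← le_sub_iff_add_le]
      refine (hL fun i => b i - h' i (x, y)).trans (forall_congr' fun k => ?_)
      rw [show (fun i => b i - h' i (x, y)) = b - LinearMap.pi h' (x, y) from rfl, map_sub,
        sub_nonneg]
      rfl
    rw [helim, hfe]
    rfl

theorem exists_forall_le_iff (E V : Type*) [AddCommGroup E] [Module ℝ E] [AddCommGroup V]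
    [Module ℝ V] [FiniteDimensional ℝ V] {ι : Type u} [Fintype ι] (h : ι → E × V →ₗ[ℝ] ℝ) :
    ∃ (κ : Type u) (_ : Fintype κ) (f : κ → E →ₗ[ℝ] ℝ) (e : κ → (ι → ℝ) →ₗ[ℝ] ℝ),
      ∀ b x, (∃ y, ∀ i, h i (x, y) ≤ b i) ↔ ∀ k, f k x ≤ e k b := by
  set φ := (Module.finBasis ℝ V).equivFun
  obtain ⟨κ, _, f, e, hfe⟩ := exists_forall_le_iff_of_fin E _
    fun i => h i ∘ₗ LinearMap.prodMap LinearMap.id φ.symm.toLinearMap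
  refine ⟨κ, inferInstance, f, e, fun b x => ?_⟩
  rw [← hfe]
  exact φ.symm.surjective.exists

lemma add_nsmul_mem_of_mem_recc {E : Type*} [AddCommGroup E] [Module ℝ E] {P : Set E} {p d : E}
    (hp : p ∈ P) (hd : d ∈ recc P) (k : ℕ) : p + k • d ∈ P := by
  induction k with
  | zero => simpa using hp
  | succ k ih => simpa [succ_nsmul, add_assoc] using hd _ ih

lemma zero_mem_recc {E : Type*} [AddCommGroup E] [Module ℝ E] (P : Set E) : 0 ∈ recc P :=
  fun p hp => by simpa using hp

lemma add_mem_recc {E : Type*} [AddCommGroup E] [Module ℝ E] {P : Set E} {d d' : E}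
    (hd : d ∈ recc P) (hd' : d' ∈ recc P) : d + d' ∈ recc P :=
  fun p hp => by simpa [add_assoc] using hd' _ (hd p hp)

lemma recc_setOf_forall_le {E ι : Type*} [AddCommGroup E] [Module ℝ E] (f : ι → E →ₗ[ℝ] ℝ)
    (b : ι → ℝ) (hne : {x | ∀ i, f i x ≤ b i}.Nonempty) :
    recc {x | ∀ i, f i x ≤ b i} = {d | ∀ i, f i d ≤ 0} := by
  ext d
  refine ⟨fun hd i => ?_, fun hd p hp i => by simpa using add_le_add (hp i) (hd i)⟩
  obtain ⟨p, hp⟩ := hne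
  by_contra! hpos
  obtain ⟨k, hk⟩ := exists_nat_gt ((b i - f i p) / f i d)
  have := add_nsmul_mem_of_mem_recc hp hd k i
  rw [map_add, map_nsmul, nsmul_eq_mul, ← le_sub_iff_add_le', ← le_div_iff₀ hpos] at this
  linarith

theorem recc_image_fst {E V ι : Type*} [AddCommGroup E] [Module ℝ E] [AddCommGroup V]
    [Module ℝ V] [FiniteDimensional ℝ V] [Fintype ι] (h : ι → E × V →ₗ[ℝ] ℝ) (b : ι → ℝ)
    (hne : {z | ∀ i, h i z ≤ b i}.Nonempty) :
    recc (Prod.fst '' {z | ∀ i, h i z ≤ b i}) = Prod.fst '' {z | ∀ i, h i z ≤ 0} := by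
  obtain ⟨κ, _, f, e, hfe⟩ := exists_forall_le_iff E V h
  have himage : ∀ b, Prod.fst '' {z | ∀ i, h i z ≤ b i} = {x | ∀ k, f k x ≤ e k b} := by
    intro b
    ext x
    simp [← hfe]
  have himage_zero : Prod.fst '' {z | ∀ i, h i z ≤ 0} = {x | ∀ k, f k x ≤ 0} := by
    simpa using himage 0
  rw [himage, recc_setOf_forall_le _ _ (himage b ▸ hne.image _), himage_zero]


lemma graphOf_add_eq_image_fst {E W : Type*} [AddCommGroup W] (F : E → Set W) (Q : Set W) :
    graphOf (fun x => F x + Q) =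
      Prod.fst '' {z : (E × W) × W | (z.1.1, z.2) ∈ graphOf F ∧ z.1.2 - z.2 ∈ Q} := by
  ext ⟨x, y⟩
  simp only [graphOf, mem_ofPred_eq, mem_add, mem_image, Prod.exists, exists_and_right,
    exists_eq_right]
  constructor
  · rintro ⟨u, hu, v, hv, rfl⟩
    exact ⟨u, hu, by simpa using hv⟩
  · rintro ⟨u, hu, hv⟩
    exact ⟨u, hu, y - u, hv, by abel⟩

def IsRecessionMap {E W : Type*} [AddCommGroup E] [Module ℝ E] [AddCommGroup W] [Module ℝ W]
    (F G : E → Set W) : Prop :=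
  graphOf G = recc (graphOf F)

section IsRecessionMap

variable {E W : Type*} [AddCommGroup E] [Module ℝ E] [AddCommGroup W] [Module ℝ W]
  {F G : E → Set W}

lemma IsRecessionMap.unique {G' : E → Set W} (hG : IsRecessionMap F G)
    (hG' : IsRecessionMap F G') : G = G' :=
  funext fun x => Set.ext fun y => Set.ext_iff.1 (hG.trans hG'.symm) (x, y)

lemma IsRecessionMap.zero_mem_zero (hG : IsRecessionMap F G) : 0 ∈ G 0 := by
  show ((0 : E), (0 : W)) ∈ graphOf G
  rw [hG]
  exact zero_mem_recc _

lemma IsRecessionMap.add_zero_subset (hG : IsRecessionMap F G) (x : E) : F x + G 0 ⊆ F x := by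
  rintro _ ⟨y, hy, d, hd, rfl⟩
  have hd' : ((0 : E), d) ∈ recc (graphOf F) := hG ▸ hd
  simpa [graphOf] using hd' (x, y) hy

lemma IsRecessionMap.self_add_zero_subset (hG : IsRecessionMap F G) (x : E) :
    G x + G 0 ⊆ G x := by
  rintro _ ⟨y, hy, d, hd, rfl⟩
  have hy' : (x, y) ∈ recc (graphOf F) := hG ▸ hy
  have hd' : ((0 : E), d) ∈ recc (graphOf F) := hG ▸ hd
  show (x, y + d) ∈ graphOf G
  rw [show graphOf G = recc (graphOf F) from hG]
  simpa using add_mem_recc hy' hd'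

theorem IsRecessionMap.add [FiniteDimensional ℝ W] {Q : Set W} (hG : IsRecessionMap F G)
    (hF : IsPolyhedron (graphOf F)) (hFne : (graphOf F).Nonempty) (hQ : IsPolyhedron Q)
    (hQne : Q.Nonempty) :
    IsRecessionMap (fun x => F x + Q) (fun x => G x + recc Q) := by
  obtain ⟨m, f, b, hFeq⟩ := hF
  obtain ⟨m', g, c, hQeq⟩ := hQ
  set H : Fin m ⊕ Fin m' → (E × W) × W →ₗ[ℝ] ℝ := Sum.elim
    (fun i => f i ∘ₗ (LinearMap.fst ℝ E W ∘ₗ LinearMap.fst ℝ _ W).prod (LinearMap.snd ℝ _ W))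
    (fun j => g j ∘ₗ (LinearMap.snd ℝ E W ∘ₗ LinearMap.fst ℝ _ W - LinearMap.snd ℝ _ W))
  have hH : ∀ β γ, {z : (E × W) × W | (z.1.1, z.2) ∈ {p | ∀ i, f i p ≤ β i} ∧
      z.1.2 - z.2 ∈ {y | ∀ j, g j y ≤ γ j}} = {z | ∀ k, H k z ≤ Sum.elim β γ k} := by
    intro β γ
    ext z
    simp [H, Sum.forall]
  have hH_zero : {z : (E × W) × W | (z.1.1, z.2) ∈ {p | ∀ i, f i p ≤ 0} ∧
      z.1.2 - z.2 ∈ {y | ∀ j, g j y ≤ 0}} = {z | ∀ k, H k z ≤ 0} := by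
    simpa using hH 0 0
  have hne : {z | ∀ k, H k z ≤ Sum.elim b c k}.Nonempty := by
    obtain ⟨⟨x, u⟩, hxu⟩ := hFne
    obtain ⟨v, hv⟩ := hQne
    refine ⟨((x, u + v), u), ?_⟩
    rw [← hH, ← hFeq, ← hQeq]
    exact ⟨hxu, by simpa using hv⟩
  rw [IsRecessionMap, eq_comm, graphOf_add_eq_image_fst, graphOf_add_eq_image_fst, hG, hFeq, hQeq,
    recc_setOf_forall_le f b (hFeq ▸ hFne), recc_setOf_forall_le g c (hQeq ▸ hQne), hH, hH_zero,
    recc_image_fst H _ hne]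

end IsRecessionMap

lemma IsConvexCone.add_mem {E : Type*} [AddCommGroup E] [Module ℝ E] {C : Set E}
    (hC : IsConvexCone C) {x y : E} (hx : x ∈ C) (hy : y ∈ C) : x + y ∈ C := by
  have hmid := hC.1 hx hy (by norm_num : (0 : ℝ) ≤ 1 / 2) (by norm_num : (0 : ℝ) ≤ 1 / 2)
    (by norm_num)
  convert hC.2 _ hmid 2 zero_le_two using 1
  simp [smul_smul]

lemma IsConvexCone.recc_eq {E : Type*} [AddCommGroup E] [Module ℝ E] {C : Set E}
    (hC : IsConvexCone C) (hC0 : 0 ∈ C) : recc C = C :=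
  Set.ext fun d => ⟨fun hd => by simpa using hd 0 hC0, fun hd _ hp => hC.add_mem hp hd⟩

lemma add_add_eq_of_add_subset {W : Type*} [AddCommMonoid W] {S C D : Set W} (hC : C + C ⊆ C)
    (hC0 : 0 ∈ C) (hD0 : 0 ∈ D) (hSD : S + D ⊆ S) : S + C + (C + D) = S + C := by
  refine Subset.antisymm ?_ (subset_add_left _ (by simpa using add_mem_add hC0 hD0))
  calc S + C + (C + D) = S + D + (C + C) := by abel
    _ ⊆ S + C := add_subset_add hSD hC

theorem stmt9 {n q : ℕ} (F G Gstd : (Fin n → ℝ) → Set (Fin q → ℝ)) (C : Set (Fin q → ℝ))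
    (hF : IsPolyhedron (graphOf F)) (hne : (graphOf F).Nonempty)
    (hG : graphOf G = recc (graphOf F))
    (hCp : IsPolyhedron C) (hCc : IsConvexCone C) (hC0 : (0 : Fin q → ℝ) ∈ C)
    (hGstd : graphOf Gstd = recc (graphOf (fun x => F x + C))) :
    (∀ x, F x + C = (F x + C) + (C + G 0)) ∧
      (∀ x, G x + C = Gstd x + (C + G 0)) ∧
      (∀ xb, (F xb).Nonempty →
        ((¬ ∃ x, (F xb + C) ⊂ (F x + C)) ↔
          ¬ ∃ x, ((F xb + C) + (C + G 0)) ⊂ ((F x + C) + (C + G 0)))) := by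
  have hGstd_eq : Gstd = fun x => G x + C := by
    have h := IsRecessionMap.add hG hF hne hCp ⟨0, hC0⟩
    rw [hCc.recc_eq hC0] at h
    exact IsRecessionMap.unique hGstd h
  have hCC : C + C ⊆ C := add_subset_iff.2 fun _ hx _ hy => hCc.add_mem hx hy
  have hG0 : (0 : Fin q → ℝ) ∈ G 0 := IsRecessionMap.zero_mem_zero hG
  have hFstd : ∀ x, F x + C + (C + G 0) = F x + C := fun x =>
    add_add_eq_of_add_subset hCC hC0 hG0 (IsRecessionMap.add_zero_subset hG x)
  refine ⟨fun x => (hFstd x).symm, fun x => ?_, fun xb _ => by simp only [hFstd]⟩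
  rw [hGstd_eq, add_add_eq_of_add_subset hCC hC0 hG0 (IsRecessionMap.self_add_zero_subset hG x)]
end

section
/- Let F : ℝⁿ ⇉ ℝ^q be polyhedral convex and S̄ ⊆ dom F a finite nonempty set. Then the recession cone of conv ⋃_{x ∈ S̄} F(x) equals G(0), where G is the recession mapping of F. -/
open Set Matrix Pointwise RealInnerProductSpace

/-- If a linear functional is bounded above on `P`, it is nonpositive on `recc P`. -/
lemma recc_linear_nonpos {E : Type*} [AddCommGroup E] [Module ℝ E]
    (P : Set E) (g : E →ₗ[ℝ] ℝ) (C : ℝ) (hbdd : ∀ y ∈ P, g y ≤ C)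
    {d : E} (hd : d ∈ recc P) {y0 : E} (hy0 : y0 ∈ P) : g d ≤ 0 := by
  have hiter : ∀ nn : ℕ, y0 + nn • d ∈ P := by
    intro nn
    induction nn with
    | zero => simpa using hy0
    | succ k ih =>
        rw [succ_nsmul, ← add_assoc]
        exact hd _ ih
  by_contra h
  push_neg at h
  obtain ⟨nn, hn⟩ := exists_nat_gt ((C - g y0) / g d)
  have h1 : g y0 + (nn : ℝ) * g d ≤ C := by
    have := hbdd _ (hiter nn)
    simpa [map_add, map_nsmul, nsmul_eq_mul] using this
  have h2 := (div_lt_iff₀ h).mp hn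
  linarith

/-- The recession cone of a nonempty polyhedron is the cone of the homogeneous system. -/
lemma recc_polyhedron {E : Type*} [AddCommGroup E] [Module ℝ E] {m : ℕ}
    (f : Fin m → (E →ₗ[ℝ] ℝ)) (b : Fin m → ℝ)
    (hne : {x | ∀ i, f i x ≤ b i}.Nonempty) :
    recc {x | ∀ i, f i x ≤ b i} = {v | ∀ i, f i v ≤ 0} := by
  ext v
  constructor
  · intro hv i
    obtain ⟨p, hp⟩ := hne
    exact recc_linear_nonpos {x | ∀ i, f i x ≤ b i} (f i) (b i) (fun y hy => hy i) hv hp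
  · intro hv p hp i
    have h1 := hp i
    have h2 := hv i
    simp only [Set.mem_setOf_eq, map_add]
    linarith

theorem stmt18 {n q : ℕ} (F G : (Fin n → ℝ) → Set (Fin q → ℝ))
    (hF : IsPolyhedron (graphOf F)) (hne : (graphOf F).Nonempty)
    (hG : graphOf G = recc (graphOf F))
    (S : Finset (Fin n → ℝ)) (hS : S.Nonempty) (hdom : ∀ x ∈ S, (F x).Nonempty) :
    recc (convexHull ℝ (⋃ x ∈ S, F x)) = G 0 := by
  obtain ⟨m, f, b, hgr⟩ := hF
  have hmem : ∀ x (y : Fin q → ℝ), y ∈ F x ↔ ∀ i, f i (x, y) ≤ b i := by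
    intro x y
    change (x, y) ∈ graphOf F ↔ _
    rw [hgr]
    rfl
  have hrec : recc (graphOf F) = {v | ∀ i, f i v ≤ 0} := by
    rw [hgr]
    exact recc_polyhedron f b (hgr ▸ hne)
  have hG0 : G 0 = {d : Fin q → ℝ | ∀ i, f i (0, d) ≤ 0} := by
    ext d
    have h0 : d ∈ G 0 ↔ ((0 : Fin n → ℝ), d) ∈ graphOf G := Iff.rfl
    rw [h0, hG, hrec]
    rfl
  obtain ⟨x0, hx0⟩ := hS
  obtain ⟨y0, hy0⟩ := hdom x0 hx0
  have hy0U : y0 ∈ ⋃ x ∈ S, F x := mem_iUnion.mpr ⟨x0, mem_iUnion.mpr ⟨hx0, hy0⟩⟩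
  have hsplit : ∀ (x : Fin n → ℝ) (y : Fin q → ℝ) i,
      f i (x, y) = f i (x, 0) + f i ((0 : Fin n → ℝ), y) := by
    intro x y i
    rw [← map_add]
    congr 1
    simp [Prod.ext_iff]
  apply Set.Subset.antisymm
  · intro d hd
    rw [hG0]
    intro i
    set g : (Fin q → ℝ) →ₗ[ℝ] ℝ := (f i).comp (LinearMap.inr ℝ (Fin n → ℝ) (Fin q → ℝ))
      with hgdef
    have hgy : ∀ y : Fin q → ℝ, g y = f i ((0 : Fin n → ℝ), y) := fun y => rfl
    have hbdd : ∀ y ∈ convexHull ℝ (⋃ x ∈ S, F x),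
        g y ≤ b i + S.sup' ⟨x0, hx0⟩ (fun x => -(f i (x, 0))) := by
      apply convexHull_min ?_ (convex_halfSpace_le (LinearMap.isLinear g) _)
      intro y hy
      simp only [mem_iUnion] at hy
      obtain ⟨x, hx, hyx⟩ := hy
      have h1 := (hmem x y).mp hyx i
      have h2 := hsplit x y i
      have h3 : -(f i (x, 0)) ≤ S.sup' ⟨x0, hx0⟩ (fun x => -(f i (x, 0))) :=
        Finset.le_sup' (fun x => -(f i (x, 0))) hx
      simp only [Set.mem_setOf_eq, hgy]
      linarith
    have := recc_linear_nonpos _ g _ hbdd hd (subset_convexHull ℝ _ hy0U)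
    rw [hgy] at this
    exact this
  · intro d hd
    rw [hG0] at hd
    intro p hp
    have hsub : (⋃ x ∈ S, F x) ⊆ {y | y + d ∈ convexHull ℝ (⋃ x ∈ S, F x)} := by
      intro y hy
      simp only [mem_iUnion] at hy
      obtain ⟨x, hx, hyx⟩ := hy
      have hyd : y + d ∈ F x := by
        rw [hmem]
        intro i
        have h1 := (hmem x y).mp hyx i
        have h2 := hd i
        have h3 := hsplit x (y + d) i
        have h4 := hsplit x y i
        have h5 : f i ((0 : Fin n → ℝ), y + d)
            = f i ((0 : Fin n → ℝ), y) + f i ((0 : Fin n → ℝ), d) := by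
          rw [← map_add]
          congr 1
          simp [Prod.ext_iff]
        linarith
      exact subset_convexHull ℝ _ (mem_iUnion.mpr ⟨x, mem_iUnion.mpr ⟨hx, hyd⟩⟩)
    have hconv : Convex ℝ {y | y + d ∈ convexHull ℝ (⋃ x ∈ S, F x)} := by
      intro a ha c hc s t hs ht hst
      have hdd : s • d + t • d = d := by rw [← add_smul, hst, one_smul]
      have key : s • (a + d) + t • (c + d) = s • a + t • c + d := by
        calc s • (a + d) + t • (c + d)
            = s • a + t • c + (s • d + t • d) := by rw [smul_add, smul_add]; abel
          _ = s • a + t • c + d := by rw [hdd]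
      show s • a + t • c + d ∈ convexHull ℝ (⋃ x ∈ S, F x)
      rw [← key]
      exact (convex_convexHull ℝ _) ha hc hs ht hst
    exact convexHull_min hsub hconv hp
end

section
/- Let C ⊆ ℝ^q be a polyhedral convex cone that is free of lines (C ∩ (−C) = {0}) and let P ⊆ ℝ^q be a nonempty convex polyhedron with 0⁺P = C. Then P has at least one vertex and P = conv(vert P) + C, where vert P is the (finite, nonempty) set of vertices of P. -/
open Set Matrix Pointwise RealInnerProductSpace

lemma recc_halfspaces {q m : ℕ} (f : Fin m → ((Fin q → ℝ) →ₗ[ℝ] ℝ)) (b : Fin m → ℝ)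
    (hne : {x | ∀ i, f i x ≤ b i}.Nonempty) :
    recc {x | ∀ i, f i x ≤ b i} = {d | ∀ i, f i d ≤ 0} := by
  ext d
  constructor
  · intro hd
    obtain ⟨p, hp⟩ := hne
    have hn : ∀ n : ℕ, p + n • d ∈ {x | ∀ i, f i x ≤ b i} := by
      intro n
      induction n with
      | zero => simpa using hp
      | succ n ih =>
        have := hd _ ih
        have he : p + (n+1 : ℕ) • d = p + n • d + d := by
          rw [add_smul, one_smul]; abel
        rw [he]; exact this
    intro i
    by_contra h
    push_neg at h
    obtain ⟨n, hn2⟩ := exists_nat_gt ((b i - f i p) / (f i d))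
    have h1 := hn n i
    simp only [map_add, map_nsmul, Set.mem_setOf_eq] at h1
    rw [nsmul_eq_mul] at h1
    have h2 : (b i - f i p) / (f i d) * f i d < n * f i d := by
      exact mul_lt_mul_of_pos_right hn2 h
    rw [div_mul_cancel₀ _ (ne_of_gt h)] at h2
    linarith
  · intro hd p hp i
    have := hp i
    simp only [map_add, Set.mem_setOf_eq]
    have := hd i
    linarith [hp i]

variable {q m : ℕ}

noncomputable def NN (f : Fin m → ((Fin q → ℝ) →ₗ[ℝ] ℝ)) (b : Fin m → ℝ) (x : Fin q → ℝ) :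
    Submodule ℝ (Fin q → ℝ) :=
  ⨅ i ∈ {i | f i x = b i}, LinearMap.ker (f i)

lemma mem_NN {f : Fin m → ((Fin q → ℝ) →ₗ[ℝ] ℝ)} {b : Fin m → ℝ} {x d : Fin q → ℝ} :
    d ∈ NN f b x ↔ ∀ i, f i x = b i → f i d = 0 := by
  simp [NN, Submodule.mem_iInf, LinearMap.mem_ker]

lemma convexP (f : Fin m → ((Fin q → ℝ) →ₗ[ℝ] ℝ)) (b : Fin m → ℝ) :
    Convex ℝ {x | ∀ i, f i x ≤ b i} := by
  intro x hx y hy a c ha hc hac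
  intro i
  have := hx i; have := hy i
  simp only [map_add, _root_.map_smul, smul_eq_mul]
  calc a * f i x + c * f i y ≤ a * b i + c * b i :=
        add_le_add (mul_le_mul_of_nonneg_left (hx i) ha) (mul_le_mul_of_nonneg_left (hy i) hc)
    _ = b i := by rw [← add_mul, hac, one_mul]

lemma extreme_of_NN_bot {f : Fin m → ((Fin q → ℝ) →ₗ[ℝ] ℝ)} {b : Fin m → ℝ} {x : Fin q → ℝ}
    (hx : x ∈ {x | ∀ i, f i x ≤ b i}) (h : NN f b x = ⊥) :
    x ∈ Set.extremePoints ℝ {x | ∀ i, f i x ≤ b i} := by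
  rw [mem_extremePoints]
  refine ⟨hx, fun y hy z hz hseg => ?_⟩
  obtain ⟨a, c, ha, hc, hac, hsum⟩ := hseg
  have key : ∀ w ∈ ({y, z} : Set (Fin q → ℝ)), w - x ∈ NN f b x → w = x := by
    intro w _ hw
    have := h ▸ hw
    simpa [sub_eq_zero] using this
  have hyz : ∀ i, f i x = b i → (f i y = b i ∧ f i z = b i) := by
    intro i hi
    have h1 := hy i; have h2 := hz i
    have h3 : a * f i y + c * f i z = b i := by
      rw [← hi, ← hsum]; simp [map_add, _root_.map_smul]
    have h3' : a * (f i y - b i) + c * (f i z - b i) = 0 := by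
      linear_combination h3 - b i * hac
    have hy' : b i ≤ f i y := by nlinarith
    have hz' : b i ≤ f i z := by nlinarith
    exact ⟨le_antisymm h1 hy', le_antisymm h2 hz'⟩
  constructor
  · apply key y (by simp)
    rw [mem_NN]; intro i hi
    rw [map_sub, (hyz i hi).1, hi, sub_self]
  · apply key z (by simp)
    rw [mem_NN]; intro i hi
    rw [map_sub, (hyz i hi).2, hi, sub_self]

lemma move {f : Fin m → ((Fin q → ℝ) →ₗ[ℝ] ℝ)} {b : Fin m → ℝ} {x d : Fin q → ℝ}
    (hx : x ∈ {x | ∀ i, f i x ≤ b i}) (hd : d ∈ NN f b x) (hj : ∃ j, 0 < f j d) :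
    ∃ t : ℝ, 0 < t ∧ (x + t • d) ∈ {x | ∀ i, f i x ≤ b i} ∧ NN f b (x + t • d) < NN f b x := by
  classical
  set S : Finset (Fin m) := Finset.univ.filter (fun i => 0 < f i d) with hSdef
  have hS : S.Nonempty := by
    obtain ⟨j, hj⟩ := hj
    exact ⟨j, by simp [hSdef, hj]⟩
  set g : Fin m → ℝ := fun i => (b i - f i x) / (f i d) with hgdef
  set t := S.inf' hS g with htdef
  have hmemS : ∀ i ∈ S, 0 < f i d := by intro i hi; simpa [hSdef] using hi
  have hslack : ∀ i ∈ S, f i x < b i := by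
    intro i hi
    rcases lt_or_eq_of_le (hx i) with h | h
    · exact h
    · exact absurd (mem_NN.mp hd i h) (ne_of_gt (hmemS i hi))
  have ht : 0 < t := by
    rw [htdef, Finset.lt_inf'_iff]
    intro i hi
    exact div_pos (sub_pos.mpr (hslack i hi)) (hmemS i hi)
  have hyP : (x + t • d) ∈ {x | ∀ i, f i x ≤ b i} := by
    intro i
    simp only [map_add, _root_.map_smul, smul_eq_mul, Set.mem_setOf_eq]
    rcases le_or_gt (f i d) 0 with h | h
    · have := mul_nonpos_of_nonneg_of_nonpos ht.le h
      linarith [hx i]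
    · have hiS : i ∈ S := by simp [hSdef, h]
      have := Finset.inf'_le g hiS
      rw [← htdef, hgdef] at this
      have := (le_div_iff₀ h).mp this
      linarith
  obtain ⟨j0, hj0S, hgj0⟩ := Finset.exists_mem_eq_inf' hS g
  have hj0d : 0 < f j0 d := hmemS j0 hj0S
  have hact : f j0 (x + t • d) = b j0 := by
    simp only [map_add, _root_.map_smul, smul_eq_mul]
    rw [htdef, hgj0, hgdef]
    field_simp
    ring
  have hle : NN f b (x + t • d) ≤ NN f b x := by
    intro e he
    rw [mem_NN] at he ⊢
    intro i hi
    apply he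
    have h0 : f i d = 0 := mem_NN.mp hd i hi
    simp [map_add, _root_.map_smul, h0, hi]
  have hdnot : d ∉ NN f b (x + t • d) := by
    intro hmem
    exact absurd (mem_NN.mp hmem j0 hact) (ne_of_gt hj0d)
  exact ⟨t, ht, hyP, lt_of_le_of_ne hle (fun h => hdnot (h ▸ hd))⟩

lemma NN_bot_of_extreme {f : Fin m → ((Fin q → ℝ) →ₗ[ℝ] ℝ)} {b : Fin m → ℝ} {x : Fin q → ℝ}
    (hx : x ∈ Set.extremePoints ℝ {x | ∀ i, f i x ≤ b i}) : NN f b x = ⊥ := by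
  obtain ⟨hxP, hext⟩ := mem_extremePoints.mp hx
  by_contra hbot
  obtain ⟨d, hd, hd0⟩ := Submodule.ne_bot_iff _ |>.mp hbot
  have hside : ∀ e, e ∈ NN f b x → ∃ t : ℝ, 0 < t ∧ (x + t • e) ∈ {x | ∀ i, f i x ≤ b i} := by
    intro e he
    by_cases hj : ∃ j, 0 < f j e
    · obtain ⟨t, ht, hy, _⟩ := move hxP he hj
      exact ⟨t, ht, hy⟩
    · push_neg at hj
      refine ⟨1, one_pos, fun i => ?_⟩
      simp only [one_smul, map_add, Set.mem_setOf_eq]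
      linarith [hxP i, hj i]
  obtain ⟨t1, ht1, hy1⟩ := hside d hd
  obtain ⟨t2, ht2, hy2⟩ := hside (-d) (neg_mem hd)
  set ε := min t1 t2 with hε
  have hε0 : 0 < ε := lt_min ht1 ht2
  have hconv := convexP f b
  have hmem : ∀ (e : Fin q → ℝ) (s : ℝ), 0 < s → (x + s • e) ∈ {x | ∀ i, f i x ≤ b i} →
      ε ≤ s → (x + ε • e) ∈ {x | ∀ i, f i x ≤ b i} := by
    intro e s hs hmem hle
    have h1 : x + ε • e = x + (ε / s) • (s • e) := by
      rw [smul_smul, div_mul_cancel₀ _ (ne_of_gt hs)]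
    rw [h1]
    exact hconv.add_smul_mem hxP (by convert hmem using 1) 
      ⟨div_nonneg hε0.le hs.le, (div_le_one hs).mpr hle⟩
  have hyy := hmem d t1 ht1 hy1 (min_le_left _ _)
  have hzz := hmem (-d) t2 ht2 hy2 (min_le_right _ _)
  have hseg : x ∈ openSegment ℝ (x + ε • (-d)) (x + ε • d) :=
    ⟨1/2, 1/2, by norm_num, by norm_num, by norm_num, by module⟩
  have := (hext _ hzz _ hyy hseg).2
  have : ε • d = 0 := by
    have h := congrArg (fun w => w - x) this
    simpa using h
  rcases smul_eq_zero.mp this with h | h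
  · exact absurd h (ne_of_gt hε0)
  · exact hd0 h

lemma convexC (f : Fin m → ((Fin q → ℝ) →ₗ[ℝ] ℝ)) :
    Convex ℝ {d : Fin q → ℝ | ∀ i, f i d ≤ 0} := by
  intro x hx y hy a c ha hc hac i
  simp only [map_add, _root_.map_smul, smul_eq_mul, Set.mem_setOf_eq]
  have h1 := mul_nonpos_of_nonneg_of_nonpos ha (hx i)
  have h2 := mul_nonpos_of_nonneg_of_nonpos hc (hy i)
  linarith

lemma decomp (f : Fin m → ((Fin q → ℝ) →ₗ[ℝ] ℝ)) (b : Fin m → ℝ)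
    (hline : ∀ d : Fin q → ℝ, (∀ i, f i d ≤ 0) → (∀ i, f i (-d) ≤ 0) → d = 0) :
    ∀ n : ℕ, ∀ x ∈ {x | ∀ i, f i x ≤ b i}, Module.finrank ℝ (NN f b x) ≤ n →
      x ∈ convexHull ℝ (Set.extremePoints ℝ {x | ∀ i, f i x ≤ b i})
        + {d : Fin q → ℝ | ∀ i, f i d ≤ 0} := by
  set P := {x | ∀ i, f i x ≤ b i} with hPdef
  set C := {d : Fin q → ℝ | ∀ i, f i d ≤ 0} with hCdef
  set Q := convexHull ℝ (Set.extremePoints ℝ P) + C with hQdef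
  have hbotcase : ∀ x ∈ P, NN f b x = ⊥ → x ∈ Q := by
    intro x hx hbot
    have hext := extreme_of_NN_bot hx hbot
    have : x = x + 0 := by simp
    rw [this]
    exact Set.add_mem_add (subset_convexHull ℝ _ hext) (by intro i; simp)
  have hQC : ∀ y ∈ Q, ∀ c ∈ C, y + c ∈ Q := by
    rintro y ⟨v, hv, c0, hc0, rfl⟩ c hc
    refine ⟨v, hv, c0 + c, fun i => ?_, by rw [add_assoc]⟩
    simp only [map_add]
    linarith [hc0 i, hc i]
  have hQconv : Convex ℝ Q := (convex_convexHull ℝ _).add (convexC f)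
  intro n
  induction n with
  | zero =>
    intro x hx h0
    exact hbotcase x hx (Submodule.finrank_eq_zero.mp (Nat.le_zero.mp h0))
  | succ n ih =>
    intro x hx hr
    by_cases hbot : NN f b x = ⊥
    · exact hbotcase x hx hbot
    obtain ⟨d, hd, hd0⟩ := Submodule.ne_bot_iff _ |>.mp hbot
    have hrank : ∀ y : Fin q → ℝ, NN f b y < NN f b x → Module.finrank ℝ (NN f b y) ≤ n := by
      intro y hy
      have := Submodule.finrank_lt_finrank_of_lt hy
      omega
    have hCsmul : ∀ (s : ℝ) (e : Fin q → ℝ), 0 ≤ s → (∀ i, f i e ≤ 0) → s • e ∈ C := by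
      intro s e hs he i
      simp only [hCdef, Set.mem_setOf_eq, _root_.map_smul, smul_eq_mul]
      exact mul_nonpos_of_nonneg_of_nonpos hs (he i)
    by_cases h1 : ∀ i, f i d ≤ 0
    · have h2 : ¬ ∀ i, f i (-d) ≤ 0 := fun h2 => hd0 (hline d h1 h2)
      push_neg at h2
      obtain ⟨t, ht, hz, hlt⟩ := move hx (neg_mem hd) h2
      have hzQ := ih _ hz (hrank _ hlt)
      have hxe : x = (x + t • (-d)) + t • d := by module
      rw [hxe]
      exact hQC _ hzQ _ (hCsmul t d ht.le h1)
    · push_neg at h1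
      obtain ⟨t, ht, hy, hlty⟩ := move hx hd h1
      have hyQ := ih _ hy (hrank _ hlty)
      by_cases h2 : ∀ i, f i (-d) ≤ 0
      · have hxe : x = (x + t • d) + t • (-d) := by module
        rw [hxe]
        exact hQC _ hyQ _ (hCsmul t (-d) ht.le h2)
      · push_neg at h2
        obtain ⟨s, hs, hz, hltz⟩ := move hx (neg_mem hd) h2
        have hzQ := ih _ hz (hrank _ hltz)
        have hst : 0 < s + t := by linarith
        have hxcomb : (s/(s+t)) • (x + t • d) + (t/(s+t)) • (x + s • (-d)) = x := by
          match_scalars <;> (field_simp; try ring)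
        have := hQconv hyQ hzQ (div_nonneg hs.le hst.le) (div_nonneg ht.le hst.le)
          (by field_simp)
        rw [hxcomb] at this
        exact this

lemma ext_finite (f : Fin m → ((Fin q → ℝ) →ₗ[ℝ] ℝ)) (b : Fin m → ℝ) :
    (Set.extremePoints ℝ {x | ∀ i, f i x ≤ b i}).Finite := by
  classical
  set F : (Fin q → ℝ) → Finset (Fin m) := fun x => Finset.univ.filter (fun i => f i x = b i)
    with hF
  have hinj : Set.InjOn F (Set.extremePoints ℝ {x | ∀ i, f i x ≤ b i}) := by
    intro x hx y hy hxy
    have hbot := NN_bot_of_extreme hx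
    have hsub : y - x ∈ NN f b x := by
      rw [mem_NN]
      intro i hi
      have hiF : i ∈ F x := by simp [hF, hi]
      rw [hxy] at hiF
      have hyb : f i y = b i := by simpa [hF] using hiF
      rw [map_sub, hyb, hi, sub_self]
    rw [hbot, Submodule.mem_bot, sub_eq_zero] at hsub
    exact hsub.symm
  exact Set.Finite.of_finite_image (Set.toFinite _) hinj

theorem stmt19' {q : ℕ} (C P : Set (Fin q → ℝ))
    (hC0 : (0 : Fin q → ℝ) ∈ C)
    (hline : C ∩ (-C) = {0}) (hP : IsPolyhedron P) (hne : P.Nonempty)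
    (hrec : recc P = C) :
    (Set.extremePoints ℝ P).Nonempty ∧ (Set.extremePoints ℝ P).Finite ∧
      P = convexHull ℝ (Set.extremePoints ℝ P) + C := by
  obtain ⟨m, f, b, rfl⟩ := hP
  have hC : C = {d : Fin q → ℝ | ∀ i, f i d ≤ 0} := by
    rw [← hrec, recc_halfspaces f b hne]
  have hline' : ∀ d : Fin q → ℝ, (∀ i, f i d ≤ 0) → (∀ i, f i (-d) ≤ 0) → d = 0 := by
    intro d h1 h2
    have hd : d ∈ C ∩ (-C) := ⟨hC ▸ h1, Set.mem_neg.mpr (hC ▸ h2)⟩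
    rw [hline] at hd
    exact hd
  have main : ∀ x ∈ {x | ∀ i, f i x ≤ b i},
      x ∈ convexHull ℝ (Set.extremePoints ℝ {x | ∀ i, f i x ≤ b i}) + C := by
    intro x hx
    rw [hC]
    exact decomp f b hline' (Module.finrank ℝ (NN f b x)) x hx le_rfl
  obtain ⟨p, hp⟩ := hne
  have hnem : (Set.extremePoints ℝ {x | ∀ i, f i x ≤ b i}).Nonempty := by
    obtain ⟨v, hv, c, hc, rfl⟩ := main p hp
    by_contra h
    rw [Set.not_nonempty_iff_eq_empty] at h
    rw [h, convexHull_empty] at hv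
    exact hv
  refine ⟨hnem, ext_finite f b, Set.Subset.antisymm main ?_⟩
  rintro _ ⟨v, hv, c, hc, rfl⟩
  have hvP : v ∈ {x | ∀ i, f i x ≤ b i} :=
    convexHull_min extremePoints_subset (convexP f b) hv
  rw [← hrec] at hc
  exact hc v hvP

theorem stmt19 {q : ℕ} (C P : Set (Fin q → ℝ))
    (hCp : IsPolyhedron C) (hCc : IsConvexCone C) (hC0 : (0 : Fin q → ℝ) ∈ C)
    (hline : C ∩ (-C) = {0}) (hP : IsPolyhedron P) (hne : P.Nonempty)
    (hrec : recc P = C) :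
    (Set.extremePoints ℝ P).Nonempty ∧ (Set.extremePoints ℝ P).Finite ∧
      P = convexHull ℝ (Set.extremePoints ℝ P) + C :=
  stmt19' C P hC0 hline hP hne hrec
end
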